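/- arXiv:1603.07576 — 6 statements merged into one kernel-verified Lean document; each statement's English description precedes it below -/
import Mathlib

section
/- For nonnegative reals p1 < p* and channel gains g1 > g2 > 0 and noise η > 0, one has log(1 + p1·g1/η) + log(1 + (p*−p1)·g2/(p1·g2 + η)) < log(1 + p*·g1/η). That is, allocating all power to the stronger user yields strictly higher sum rate than splitting power between two users on one channel. -/
/-!
With successive interference cancellation the weak user's rate telescopes:
`log (1 + (p - p₁) g / (p₁ g + η)) = log (1 + p g / η) - log (1 + p₁ g / η)`.
So the split sum rate is `log (1 + p* g₂ / η)` plus the gap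
`log (1 + p g₁ / η) - log (1 + p g₂ / η)` taken at `p = p₁`, whereas the single-user rate is the
same expression with the gap taken at `p = p*`. The gap is the logarithm of
`(η + p g₁) / (η + p g₂)`, which is strictly increasing in `p` when `g₁ > g₂`.
-/

open Real

theorem log_one_add_interference {p p₁ g η : ℝ} (hη : η ≠ 0) (hp : η + p * g ≠ 0)
    (hp₁ : p₁ * g + η ≠ 0) :
    log (1 + (p - p₁) * g / (p₁ * g + η)) = log (1 + p * g / η) - log (1 + p₁ * g / η) := by
  have h_num : p₁ * g + η + (p - p₁) * g = η + p * g := by ring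
  rw [one_add_div hp₁, h_num, one_add_div hη, one_add_div hη, log_div hp hp₁, log_div hp hη,
    log_div (by rwa [add_comm]) hη, add_comm η (p₁ * g)]
  ring

theorem log_one_add_div_sub_log_one_add_div {a b η : ℝ} (hη : η ≠ 0) (ha : η + a ≠ 0)
    (hb : η + b ≠ 0) :
    log (1 + a / η) - log (1 + b / η) = log ((η + a) / (η + b)) := by
  rw [one_add_div hη, one_add_div hη, ← log_div (div_ne_zero ha hη) (div_ne_zero hb hη),
    div_div_div_cancel_right₀ hη]

theorem add_mul_div_add_mul_lt_of_lt {p q g₁ g₂ η : ℝ} (hη : 0 < η) (hp : 0 ≤ p) (hpq : p < q)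
    (hg₂ : 0 ≤ g₂) (hg : g₂ < g₁) :
    (η + p * g₁) / (η + p * g₂) < (η + q * g₁) / (η + q * g₂) := by
  have hq : 0 ≤ q := hp.trans hpq.le
  rw [div_lt_div_iff₀ (by positivity) (by positivity)]
  have h_diff : (η + q * g₁) * (η + p * g₂) - (η + p * g₁) * (η + q * g₂)
      = η * ((q - p) * (g₁ - g₂)) := by ring
  linarith [mul_pos hη (mul_pos (sub_pos.2 hpq) (sub_pos.2 hg))]

theorem log_rate_gap_lt {p q g₁ g₂ η : ℝ} (hη : 0 < η) (hp : 0 ≤ p) (hpq : p < q)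
    (hg₂ : 0 ≤ g₂) (hg : g₂ < g₁) :
    log (1 + p * g₁ / η) - log (1 + p * g₂ / η) < log (1 + q * g₁ / η) - log (1 + q * g₂ / η) := by
  have hq : 0 ≤ q := hp.trans hpq.le
  have hg₁ : 0 ≤ g₁ := hg₂.trans hg.le
  rw [log_one_add_div_sub_log_one_add_div hη.ne' (by positivity) (by positivity),
    log_one_add_div_sub_log_one_add_div hη.ne' (by positivity) (by positivity)]
  exact log_lt_log (by positivity) (add_mul_div_add_mul_lt_of_lt hη hp hpq hg₂ hg)

/-- Allocating all power to the stronger user yields strictly higher sum rate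
than splitting power between two users on one channel. -/
theorem noma_single_user_better (g1 g2 η p1 pstar : ℝ)
    (hg : g1 > g2) (hg2 : g2 > 0) (hη : η > 0) (hp1 : 0 ≤ p1) (hlt : p1 < pstar) :
    Real.log (1 + p1 * g1 / η) +
      Real.log (1 + (pstar - p1) * g2 / (p1 * g2 + η)) <
    Real.log (1 + pstar * g1 / η) := by
  have hpstar : 0 ≤ pstar := hp1.trans hlt.le
  rw [log_one_add_interference hη.ne' (by positivity) (by positivity)]
  linarith [log_rate_gap_lt hη hp1 hlt hg2.le hg]
end

section
/- For the single-carrier NOMA sum-rate utility f(p1,…,pK) with g1 ≥ g2 ≥ … ≥ gK > 0, the partial derivatives satisfy ∂f/∂p_1 ≥ ∂f/∂p_2 ≥ … ≥ ∂f/∂p_K > 0 at every point with nonnegative powers. -/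
/-!
Near a nonnegative power vector the `k`-th summand equals `log N_k - log D_k`, where
`D_k = g_k ∑_{h<k} p_h + η` and `N_k = D_k + g_k p_k = g_k ∑_{h≤k} p_h + η`. Hence
`∂f/∂p_j = ∑_{k≥j} g_k / N_k - ∑_{k>j} g_k / D_k`, and consecutive partials differ by
`g_j / N_j - g_{j+1} / D_{j+1} = φ(g_j) - φ(g_{j+1})` with `φ x = x / (T x + η)` and
`T = ∑_{h≤j} p_h ≥ 0`. Since `φ` is increasing this is nonnegative, and the last partial is
`g_K / N_K > 0`.
-/

open Finset

section TailSumSub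

variable {ι : Type*} [LinearOrder ι] [LocallyFiniteOrderTop ι]

def tailSumSub (a b : ι → ℝ) (j : ι) : ℝ := ∑ k ∈ Ici j, a k - ∑ k ∈ Ioi j, b k

lemma tailSumSub_sub_of_covBy (a b : ι → ℝ) {j j' : ι} (h : j ⋖ j') :
    tailSumSub a b j - tailSumSub a b j' = a j - b j' := by
  have hIoi : Ioi j = Ici j' := by rw [← coe_inj, coe_Ioi, coe_Ici, h.Ioi_eq]
  rw [tailSumSub, tailSumSub, Ici_eq_cons_Ioi j, sum_cons, hIoi, Ici_eq_cons_Ioi j']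
  simp only [sum_cons]
  ring

lemma tailSumSub_top [OrderTop ι] (a b : ι → ℝ) : tailSumSub a b ⊤ = a ⊤ := by
  simp [tailSumSub, Ici_eq_cons_Ioi]

lemma antitone_tailSumSub [LocallyFiniteOrder ι] {a b : ι → ℝ}
    (h : ∀ j j', j ⋖ j' → b j' ≤ a j) : Antitone (tailSumSub a b) :=
  (antitone_iff_forall_covBy _).2 fun j j' hjj' => by
    linarith [tailSumSub_sub_of_covBy a b hjj', h j j' hjj']

end TailSumSub

lemma monotoneOn_div_mul_add {T η : ℝ} (hT : 0 ≤ T) (hη : 0 < η) :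
    MonotoneOn (fun x => x / (T * x + η)) (Set.Ici 0) := by
  intro x (hx : 0 ≤ x) y (hy : 0 ≤ y) hxy
  dsimp only
  rw [div_le_div_iff₀ (by positivity) (by positivity)]
  nlinarith

section SumRate

variable {ι : Type*}

lemma hasFDerivAt_log_sum_mul_add [Fintype ι] (s : Finset ι) (c η : ℝ) {p : ι → ℝ}
    (hp : ∑ h ∈ s, p h * c + η ≠ 0) :
    HasFDerivAt (fun q : ι → ℝ => Real.log (∑ h ∈ s, q h * c + η))
      ((∑ h ∈ s, p h * c + η)⁻¹ •
        ∑ h ∈ s, c • ContinuousLinearMap.proj (R := ℝ) (φ := fun _ : ι => ℝ) h) p :=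
  ((HasFDerivAt.fun_sum fun h _ =>
    (ContinuousLinearMap.proj (R := ℝ) (φ := fun _ : ι => ℝ) h).hasFDerivAt.mul_const c).add_const
      η).log hp

variable [LinearOrder ι] [LocallyFiniteOrderBot ι]

lemma log_one_add_div_sum_Iio {q : ι → ℝ} {c η : ℝ} {k : ι}
    (hD : ∑ h ∈ Iio k, q h * c + η ≠ 0) (hN : ∑ h ∈ Iic k, q h * c + η ≠ 0) :
    Real.log (1 + q k * c / (∑ h ∈ Iio k, q h * c + η)) =
      Real.log (∑ h ∈ Iic k, q h * c + η) - Real.log (∑ h ∈ Iio k, q h * c + η) := by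
  rw [← Real.log_div hN hD]
  congr 1
  rw [← Iio_insert, sum_insert notMem_Iio_self, eq_div_iff hD, add_mul, div_mul_cancel₀ _ hD]
  ring

lemma div_sum_Iio_le_div_sum_Iic_of_covBy {g p : ι → ℝ} {η : ℝ} {j j' : ι} (h : j ⋖ j')
    (hg : 0 ≤ g j') (hgg : g j' ≤ g j) (hp : ∀ k, 0 ≤ p k) (hη : 0 < η) :
    g j' / (∑ h ∈ Iio j', p h * g j' + η) ≤ g j / (∑ h ∈ Iic j, p h * g j + η) := by
  have hIio : Iio j' = Iic j := by rw [← coe_inj, coe_Iio, coe_Iic, h.Iio_eq]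
  rw [hIio, ← sum_mul, ← sum_mul]
  exact monotoneOn_div_mul_add (sum_nonneg fun h _ => hp h) hη hg (hg.trans hgg) hgg

variable [Fintype ι]

noncomputable def sumRate (g : ι → ℝ) (η : ℝ) (p : ι → ℝ) : ℝ :=
  ∑ k, Real.log (1 + p k * g k / (∑ h ∈ Iio k, p h * g k + η))

variable {g : ι → ℝ} {η : ℝ} {p : ι → ℝ}

lemma sumRate_eventuallyEq (hD : ∀ k, ∑ h ∈ Iio k, p h * g k + η ≠ 0)
    (hN : ∀ k, ∑ h ∈ Iic k, p h * g k + η ≠ 0) :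
    sumRate g η =ᶠ[nhds p] fun q => ∑ k,
      (Real.log (∑ h ∈ Iic k, q h * g k + η) - Real.log (∑ h ∈ Iio k, q h * g k + η)) := by
  have hcont (s : Finset ι) (c : ℝ) : Continuous fun q : ι → ℝ => ∑ h ∈ s, q h * c + η := by
    fun_prop
  have hne : ∀ᶠ q in nhds p, ∀ k,
      ∑ h ∈ Iio k, q h * g k + η ≠ 0 ∧ ∑ h ∈ Iic k, q h * g k + η ≠ 0 :=
    Filter.eventually_all.2 fun k => ((hcont _ _).continuousAt.eventually_ne (hD k)).and
      ((hcont _ _).continuousAt.eventually_ne (hN k))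
  filter_upwards [hne] with q hq
  exact sum_congr rfl fun k _ => log_one_add_div_sum_Iio (hq k).1 (hq k).2

lemma fderiv_sumRate_apply_single [LocallyFiniteOrderTop ι]
    (hD : ∀ k, ∑ h ∈ Iio k, p h * g k + η ≠ 0) (hN : ∀ k, ∑ h ∈ Iic k, p h * g k + η ≠ 0)
    (j : ι) :
    fderiv ℝ (sumRate g η) p (Pi.single j 1) =
      tailSumSub (fun k => g k / (∑ h ∈ Iic k, p h * g k + η))
        (fun k => g k / (∑ h ∈ Iio k, p h * g k + η)) j := by
  have hderiv := HasFDerivAt.fun_sum (u := univ) fun k _ =>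
    (hasFDerivAt_log_sum_mul_add (Iic k) (g k) η (hN k)).fun_sub
      (hasFDerivAt_log_sum_mul_add (Iio k) (g k) η (hD k))
  rw [(sumRate_eventuallyEq hD hN).fderiv_eq, hderiv.fderiv]
  simp only [_root_.sum_apply, sub_apply, smul_apply, ContinuousLinearMap.proj_apply,
    Pi.single_apply, smul_eq_mul, mul_ite, mul_one, mul_zero, sum_ite_eq', mem_Iic, mem_Iio,
    sum_sub_distrib]
  rw [← sum_filter, ← sum_filter, filter_le_eq_Ici, filter_lt_eq_Ioi, tailSumSub]
  simp only [inv_mul_eq_div]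

end SumRate

/-- For the single-carrier NOMA sum rate with descending gains, the partial
derivatives are ordered `∂f/∂p_1 ≥ ⋯ ≥ ∂f/∂p_K > 0` at every nonnegative point. -/
theorem noma_partial_derivatives_ordered (K : ℕ) (g : Fin K → ℝ) (η : ℝ)
    (hg : ∀ k, 0 < g k) (hsort : ∀ k l : Fin K, k ≤ l → g l ≤ g k) (hη : 0 < η)
    (f : (Fin K → ℝ) → ℝ)
    (hf : ∀ p : Fin K → ℝ, f p =
      ∑ k : Fin K,
        Real.log (1 + p k * g k / ((∑ h ∈ Finset.Iio k, p h * g k) + η)))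
    (p : Fin K → ℝ) (hp : ∀ k, 0 ≤ p k) :
    (∀ k l : Fin K, k ≤ l →
        fderiv ℝ f p (Pi.single l 1) ≤ fderiv ℝ f p (Pi.single k 1)) ∧
    (∀ k : Fin K, 0 < fderiv ℝ f p (Pi.single k 1)) := by
  have hpos (s : Finset (Fin K)) (k : Fin K) : 0 < ∑ h ∈ s, p h * g k + η :=
    add_pos_of_nonneg_of_pos (sum_nonneg fun h _ => mul_nonneg (hp h) (hg k).le) hη
  have hpartial (j : Fin K) : fderiv ℝ f p (Pi.single j 1) = tailSumSub
      (fun k => g k / (∑ h ∈ Iic k, p h * g k + η))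
      (fun k => g k / (∑ h ∈ Iio k, p h * g k + η)) j := by
    rw [show f = sumRate g η from funext hf]
    exact fderiv_sumRate_apply_single (fun k => (hpos _ k).ne') (fun k => (hpos _ k).ne') j
  have hanti := antitone_tailSumSub fun j j' hjj' =>
    div_sum_Iio_le_div_sum_Iic_of_covBy hjj' (hg j').le (hsort j j' hjj'.le) hp hη
  refine ⟨fun k l hkl => by simpa only [hpartial] using hanti hkl, fun k => ?_⟩
  have : NeZero K := NeZero.of_pos k.pos
  rw [hpartial]
  refine lt_of_lt_of_le ?_ (hanti le_top)
  rw [tailSumSub_top]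
  exact div_pos (hg ⊤) (hpos _ ⊤)
end

section
/- For single-carrier NOMA sum-rate maximization subject only to a total power constraint Σ_k p_k ≤ P_tot (no per-user limits), the allocation p_1 = P_tot, p_2 = … = p_K = 0 is optimal, i.e., f(P_tot, 0, …, 0) ≥ f(p) for every feasible nonnegative p. -/
/-!
Write `S k = ∑_{h<k} p h` for the power of the users decoded before user `k`. User `k`'s rate is
`log ((S k + p k) g k + η) - log (S k g k + η)`, and for fixed `S k` and `p k` this difference is
nondecreasing in the channel gain, so replacing `g k` by the best gain `g 0` can only raise
every term. With the common gain `g 0` the sum telescopes to `log (1 + (∑ p) g 0 / η)`, which is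
exactly the rate of the allocation that gives all power to user `0`.
-/

open Finset Real

theorem Fin.sum_sub_sum_Iio_telescope {M G : Type*} [AddCommMonoid M] [AddCommGroup G]
    (F : M → G) : ∀ {n : ℕ} (p : Fin n → M),
    ∑ k, (F (∑ h < k, p h + p k) - F (∑ h < k, p h)) = F (∑ k, p k) - F 0
  | 0, _ => by simp
  | n + 1, p => by
    have hlast : ∑ h < Fin.last n, p h = ∑ k : Fin n, p k.castSucc := by
      rw [Fin.Iio_last_eq_map, sum_map]; rfl
    simp only [Fin.sum_univ_castSucc (n := n), Fin.sum_Iio_castSucc, hlast,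
      Fin.sum_sub_sum_Iio_telescope F (fun k => p k.castSucc)]
    abel

lemma add_mul_add_div_le_of_le {η a b g g' : ℝ} (hη : 0 < η) (hb : 0 ≤ b) (hba : b ≤ a)
    (hg : 0 ≤ g) (hgg : g ≤ g') :
    (a * g + η) / (b * g + η) ≤ (a * g' + η) / (b * g' + η) := by
  rw [div_le_div_iff₀ (by positivity) (by nlinarith)]
  nlinarith [mul_nonneg (mul_nonneg hη.le (sub_nonneg.2 hba)) (sub_nonneg.2 hgg)]

lemma log_one_add_div_le_log_sub_log {η s x g g' : ℝ} (hη : 0 < η) (hs : 0 ≤ s) (hx : 0 ≤ x)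
    (hg : 0 ≤ g) (hgg : g ≤ g') :
    log (1 + x * g / (s * g + η)) ≤ log ((s + x) * g' + η) - log (s * g' + η) := by
  have hden : 0 < s * g + η := by positivity
  have hrate : 1 + x * g / (s * g + η) = ((s + x) * g + η) / (s * g + η) := by
    field_simp
    ring
  rw [hrate, ← log_div (by nlinarith) (by nlinarith)]
  exact log_le_log (by positivity) (add_mul_add_div_le_of_le hη hs (by linarith) hg hgg)

noncomputable def nomaSumRate {n : ℕ} (g : Fin n → ℝ) (η : ℝ) (p : Fin n → ℝ) : ℝ :=
  ∑ k, log (1 + p k * g k / ((∑ h ∈ Iio k, p h * g k) + η))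

lemma nomaSumRate_le {n : ℕ} {g : Fin n → ℝ} {η G : ℝ} {p : Fin n → ℝ} (hη : 0 < η)
    (hg : ∀ k, 0 ≤ g k) (hG : ∀ k, g k ≤ G) (hp : ∀ k, 0 ≤ p k) :
    nomaSumRate g η p ≤ log (1 + (∑ k, p k) * G / η) := by
  have hpower : 0 ≤ (∑ k, p k) * G := by
    rw [sum_mul]
    exact sum_nonneg fun k _ => mul_nonneg (hp k) ((hg k).trans (hG k))
  have hsum : log (1 + (∑ k, p k) * G / η) = log ((∑ k, p k) * G + η) - log (0 * G + η) := by
    rw [zero_mul, zero_add, ← log_div (by positivity) hη.ne', add_div, div_self hη.ne', add_comm]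
  rw [hsum, ← Fin.sum_sub_sum_Iio_telescope (fun x => log (x * G + η)) p, nomaSumRate]
  refine sum_le_sum fun k _ => ?_
  rw [← sum_mul]
  exact log_one_add_div_le_log_sub_log hη (sum_nonneg fun h _ => hp h) (hp k) (hg k) (hG k)

lemma nomaSumRate_ite_eq {n : ℕ} (g : Fin n → ℝ) (η P : ℝ) (i : Fin n) :
    nomaSumRate g η (fun k => if k = i then P else 0) = log (1 + P * g i / η) := by
  rw [nomaSumRate, sum_eq_single i (fun k _ hk => by simp [hk]) (by simp)]
  simp

theorem noma_all_power_to_best_user_optimal_general (K : ℕ) (hK : 0 < K)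
    (g : Fin K → ℝ) (η Ptot : ℝ)
    (hg : ∀ k, 0 < g k) (hsort : ∀ k l : Fin K, k ≤ l → g l ≤ g k)
    (hη : 0 < η)
    (f : (Fin K → ℝ) → ℝ)
    (hf : ∀ p : Fin K → ℝ, f p =
      ∑ k : Fin K,
        Real.log (1 + p k * g k / ((∑ h ∈ Finset.Iio k, p h * g k) + η))) :
    ∀ p : Fin K → ℝ, (∀ k, 0 ≤ p k) → (∑ k, p k) ≤ Ptot →
      f p ≤ f (fun k => if k = ⟨0, hK⟩ then Ptot else 0) := by
  intro p hp hsum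
  have hf' : f = nomaSumRate g η := funext hf
  have hg0 : 0 ≤ g ⟨0, hK⟩ := (hg _).le
  have htotal : 0 ≤ ∑ k, p k := sum_nonneg fun k _ => hp k
  rw [hf', nomaSumRate_ite_eq]
  calc nomaSumRate g η p ≤ log (1 + (∑ k, p k) * g ⟨0, hK⟩ / η) :=
        nomaSumRate_le hη (fun k => (hg k).le)
          (fun k => hsort _ k (Fin.mk_le_of_le_val k.val.zero_le)) hp
    _ ≤ log (1 + Ptot * g ⟨0, hK⟩ / η) := by
        gcongr

/-- Lemma 1: with only a total power constraint, giving all power to the user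
with the best gain is optimal for the single-carrier NOMA sum rate. -/
theorem noma_all_power_to_best_user_optimal (K : ℕ) (hK : 0 < K)
    (g : Fin K → ℝ) (η Ptot : ℝ)
    (hg : ∀ k, 0 < g k) (hsort : ∀ k l : Fin K, k ≤ l → g l ≤ g k)
    (hη : 0 < η) (hP : 0 < Ptot)
    (f : (Fin K → ℝ) → ℝ)
    (hf : ∀ p : Fin K → ℝ, f p =
      ∑ k : Fin K,
        Real.log (1 + p k * g k / ((∑ h ∈ Finset.Iio k, p h * g k) + η))) :
    ∀ p : Fin K → ℝ, (∀ k, 0 ≤ p k) → (∑ k, p k) ≤ Ptot →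
      f p ≤ f (fun k => if k = ⟨0, hK⟩ then Ptot else 0) :=
  noma_all_power_to_best_user_optimal_general K hK g η Ptot hg hsort hη f hf
end

section
/- For two users on one subcarrier with gains g1 > g2 > 0, powers p1 > 0, p2 > 0, total p* = p1 + p2, the sum of the two users' NOMA rates R^(2) = log((p1·g1+η)/η) + log((p*·g2+η)/(p1·g2+η)) is strictly less than the single-user rate R^(1) = log((p*·g1+η)/η), and hence R^(2) − R^(1) = log( (p1·g1·p*·g2 + p1·g1·η + p*·g2·η + η²) / (p1·g1·p*·g2 + p*·g1·η + p1·g2·η + η²) ) < 0. -/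
/-! Write `A = p₁g₁ + η`, `B = p*g₂ + η`, `C = p*g₁ + η`, `D = p₁g₂ + η`. Then
`R⁽²⁾ − R⁽¹⁾ = log (AB / CD)`, and `CD − AB = η p₂ (g₁ − g₂) > 0`: moving the power `p₂` from
the strong user to the weak one loses in proportion to the gain gap `g₁ − g₂`. -/

open Real

lemma log_div_add_log_div_sub_log_div {a b c d e : ℝ} (ha : 0 < a) (hb : 0 < b) (hc : 0 < c)
    (hd : 0 < d) (he : 0 < e) :
    log (a / e) + log (b / d) - log (c / e) = log (a * b / (c * d)) := by
  rw [log_div ha.ne' he.ne', log_div hb.ne' hd.ne', log_div hc.ne' he.ne',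
    log_div (mul_pos ha hb).ne' (mul_pos hc hd).ne', log_mul ha.ne' hb.ne',
    log_mul hc.ne' hd.ne']
  ring

lemma mul_add_mul_add_lt_mul_add_mul_add {p q g₁ g₂ η : ℝ} (hpq : p < q) (hg : g₂ < g₁)
    (hη : 0 < η) :
    (p * g₁ + η) * (q * g₂ + η) < (q * g₁ + η) * (p * g₂ + η) := by
  have gap : (q * g₁ + η) * (p * g₂ + η) - (p * g₁ + η) * (q * g₂ + η)
      = η * (q - p) * (g₁ - g₂) := by ring
  have : 0 < η * (q - p) * (g₁ - g₂) := by
    have := sub_pos.2 hpq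
    have := sub_pos.2 hg
    positivity
  linarith

/-- Core computation of Lemma 2: the two-user NOMA sum rate is strictly below
the single-user rate, expressed via the quotient of log arguments. -/
theorem noma_two_user_below_oma (g1 g2 η p1 p2 : ℝ)
    (hg : g1 > g2) (hg2 : g2 > 0) (hη : η > 0) (hp1 : 0 < p1) (hp2 : 0 < p2) :
    (Real.log ((p1 * g1 + η) / η) +
        Real.log (((p1 + p2) * g2 + η) / (p1 * g2 + η))
      < Real.log (((p1 + p2) * g1 + η) / η)) ∧
    (Real.log ((p1 * g1 + η) / η) +
        Real.log (((p1 + p2) * g2 + η) / (p1 * g2 + η))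
      - Real.log (((p1 + p2) * g1 + η) / η)
      = Real.log ((p1 * g1 * ((p1 + p2) * g2) + p1 * g1 * η + (p1 + p2) * g2 * η + η ^ 2)
          / (p1 * g1 * ((p1 + p2) * g2) + (p1 + p2) * g1 * η + p1 * g2 * η + η ^ 2))) ∧
    Real.log ((p1 * g1 * ((p1 + p2) * g2) + p1 * g1 * η + (p1 + p2) * g2 * η + η ^ 2)
        / (p1 * g1 * ((p1 + p2) * g2) + (p1 + p2) * g1 * η + p1 * g2 * η + η ^ 2)) < 0 := by
  have hg1 : 0 < g1 := hg2.trans hg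
  have hsplit := log_div_add_log_div_sub_log_div (a := p1 * g1 + η) (b := (p1 + p2) * g2 + η)
    (c := (p1 + p2) * g1 + η) (d := p1 * g2 + η) (by positivity) (by positivity) (by positivity)
    (by positivity) hη
  have hgap := mul_add_mul_add_lt_mul_add_mul_add (lt_add_of_pos_right p1 hp2) hg hη
  have hneg : log ((p1 * g1 + η) * ((p1 + p2) * g2 + η) / (((p1 + p2) * g1 + η) * (p1 * g2 + η)))
      < 0 :=
    log_neg (by positivity) ((div_lt_one (by positivity)).2 hgap)
  have hnum : p1 * g1 * ((p1 + p2) * g2) + p1 * g1 * η + (p1 + p2) * g2 * η + η ^ 2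
      = (p1 * g1 + η) * ((p1 + p2) * g2 + η) := by ring
  have hden : p1 * g1 * ((p1 + p2) * g2) + (p1 + p2) * g1 * η + p1 * g2 * η + η ^ 2
      = ((p1 + p2) * g1 + η) * (p1 * g2 + η) := by ring
  rw [hnum, hden]
  exact ⟨by linarith, hsplit, hneg⟩
end

section
/- In two-user single-carrier NOMA with gains g1 ≥ g2 and SIC, for any total power p* ≥ 0 the sum rate log(1 + p1 g1/η) + log(1 + p2 g2/(p1 g2 + η)) subject to p1 + p2 = p*, p1, p2 ≥ 0 is maximized at p1 = p*, and its maximum value equals log(1 + p*·g1/η). -/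
/-! Exponentiating, the claim is that
`(1 + p₁g₁/η) (1 + p₂g₂/(p₁g₂ + η)) ≤ 1 + (p₁ + p₂)g₁/η`,
and the gap between the two sides is exactly `p₂(g₁ - g₂)/(p₁g₂ + η) ≥ 0`. -/

open Real

section

variable {g1 g2 η p1 p2 : ℝ}

lemma one_add_sinr_mul_le (hg : g2 ≤ g1) (hg2 : 0 ≤ g2) (hη : 0 < η) (hp1 : 0 ≤ p1)
    (hp2 : 0 ≤ p2) :
    (1 + p1 * g1 / η) * (1 + p2 * g2 / (p1 * g2 + η)) ≤ 1 + (p1 + p2) * g1 / η := by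
  have hd : 0 < p1 * g2 + η := by positivity
  have gap : 1 + (p1 + p2) * g1 / η - (1 + p1 * g1 / η) * (1 + p2 * g2 / (p1 * g2 + η))
      = p2 * (g1 - g2) / (p1 * g2 + η) := by
    field_simp
    ring
  have gap_nonneg : 0 ≤ p2 * (g1 - g2) / (p1 * g2 + η) :=
    div_nonneg (mul_nonneg hp2 (sub_nonneg.mpr hg)) hd.le
  linarith

lemma log_sum_rate_le (hg : g2 ≤ g1) (hg2 : 0 ≤ g2) (hη : 0 < η) (hp1 : 0 ≤ p1)
    (hp2 : 0 ≤ p2) :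
    log (1 + p1 * g1 / η) + log (1 + p2 * g2 / (p1 * g2 + η))
      ≤ log (1 + (p1 + p2) * g1 / η) := by
  have hg1 : 0 ≤ g1 := hg2.trans hg
  rw [← log_mul (by positivity) (by positivity)]
  exact log_le_log (by positivity) (one_add_sinr_mul_le hg hg2 hη hp1 hp2)

end

theorem noma_two_user_max_at_strong_general (g1 g2 η pstar : ℝ)
    (hg : g2 ≤ g1) (hg2 : 0 < g2) (hη : 0 < η) :
    (∀ p1 p2 : ℝ, 0 ≤ p1 → 0 ≤ p2 → p1 + p2 = pstar →
        Real.log (1 + p1 * g1 / η) + Real.log (1 + p2 * g2 / (p1 * g2 + η))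
          ≤ Real.log (1 + pstar * g1 / η)) ∧
    Real.log (1 + pstar * g1 / η) + Real.log (1 + 0 * g2 / (pstar * g2 + η))
      = Real.log (1 + pstar * g1 / η) := by
  refine ⟨fun p1 p2 hp1 hp2 hsum => ?_, by simp⟩
  subst hsum
  exact log_sum_rate_le hg hg2.le hη hp1 hp2

/-- Two-user single-carrier NOMA: for fixed total power `p*`, the sum rate is
maximized by giving everything to the stronger user, with maximum value
`log(1 + p* g1 / η)`. -/
theorem noma_two_user_max_at_strong (g1 g2 η pstar : ℝ)
    (hg : g2 ≤ g1) (hg2 : 0 < g2) (hη : 0 < η) (hp : 0 ≤ pstar) :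
    (∀ p1 p2 : ℝ, 0 ≤ p1 → 0 ≤ p2 → p1 + p2 = pstar →
        Real.log (1 + p1 * g1 / η) + Real.log (1 + p2 * g2 / (p1 * g2 + η))
          ≤ Real.log (1 + pstar * g1 / η)) ∧
    Real.log (1 + pstar * g1 / η) + Real.log (1 + 0 * g2 / (pstar * g2 + η))
      = Real.log (1 + pstar * g1 / η) :=
  noma_two_user_max_at_strong_general g1 g2 η pstar hg hg2 hη
end

section
/- Under the dominant-user construction (one user k̄ with uniform gain 1 on all N subcarriers and weight e^{KN}, all other users with gains and weights at most e^{−KN}, per-user power limit 1, noise η = ε with 0 < ε < e^{−KN}), for any power budget 0 < p ≤ 1 the weighted rate e^{KN}·log(1 + p/ε) obtained by giving power p to user k̄ on one subcarrier strictly exceeds K·N·e^{−KN}·log(1 + e^{−KN}·p/ε), an upper bound on the total weighted rate achievable by distributing p among all other users over all subcarriers. -/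
/-!
Write `c = K N ≥ 0`. The rate `log (1 + g p / ε)` is monotone in the gain `g`, so the other users'
bound is at most `c e^{-c} log (1 + p / ε)`; and `c e^{-c} ≤ c < c + 1 ≤ e^c`, while
`log (1 + p / ε) > 0`.
-/

open Real

lemma mul_exp_neg_lt_exp {x : ℝ} (hx : 0 ≤ x) : x * exp (-x) < exp x :=
  calc x * exp (-x) ≤ x := mul_le_of_le_one_right hx (exp_le_one_iff.mpr (by linarith))
    _ < x + 1 := lt_add_one x
    _ ≤ exp x := add_one_le_exp x

lemma log_one_add_div_le_log_one_add_div {a b ε : ℝ} (ha : 0 ≤ a) (hab : a ≤ b) (hε : 0 < ε) :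
    log (1 + a / ε) ≤ log (1 + b / ε) :=
  log_le_log (by positivity) (by gcongr)

theorem noma_dominant_user_general (K N : ℕ)
    (ε p : ℝ) (hε : 0 < ε)
    (hp : 0 < p) :
    Real.exp (K * N : ℝ) * Real.log (1 + p / ε) >
      (K * N : ℝ) * Real.exp (-(K * N : ℝ)) *
        Real.log (1 + Real.exp (-(K * N : ℝ)) * p / ε) := by
  set c : ℝ := (K * N : ℝ)
  have hc : 0 ≤ c := by positivity
  have hrate : 0 < log (1 + p / ε) := log_pos (lt_add_of_pos_right 1 (div_pos hp hε))
  have hgain : exp (-c) * p ≤ p := mul_le_of_le_one_left hp.le (exp_le_one_iff.mpr (by linarith))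
  calc c * exp (-c) * log (1 + exp (-c) * p / ε)
      ≤ c * exp (-c) * log (1 + p / ε) :=
        mul_le_mul_of_nonneg_left
          (log_one_add_div_le_log_one_add_div (by positivity) hgain hε) (by positivity)
    _ < exp c * log (1 + p / ε) := mul_lt_mul_of_pos_right (mul_exp_neg_lt_exp hc) hrate

/-- Quantitative core of the NP-hardness reduction (Theorem 1): the dominant
user's weighted rate exceeds the bound on all other users' total weighted rate. -/
theorem noma_dominant_user (K N : ℕ) (hK : 1 ≤ K) (hN : 1 ≤ N)
    (ε p : ℝ) (hε : 0 < ε) (hεlt : ε < Real.exp (-(K * N : ℝ)))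
    (hp : 0 < p) (hp1 : p ≤ 1) :
    Real.exp (K * N : ℝ) * Real.log (1 + p / ε) >
      (K * N : ℝ) * Real.exp (-(K * N : ℝ)) *
        Real.log (1 + Real.exp (-(K * N : ℝ)) * p / ε) :=
  noma_dominant_user_general K N ε p hε hp
end
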